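/- arXiv:2303.10658 — 4 statements merged into one kernel-verified Lean document; each statement's English description precedes it below -/
import Mathlib

section
/- For any real 3×4 matrices P₁ and P₂, the matrix ψ(P₁,P₂) has rank at most 2. Moreover, if P₁ and P₂ are cameras (i.e., have rank 3) with distinct centers (ker P₁ ≠ ker P₂), then ψ(P₁,P₂) has rank exactly 2. -/
open Matrix

/-- The 6×6 matrix whose first three rows form the block `[P₁ | x | 0]` and whose last
three rows form the block `[P₂ | 0 | y]`. -/
noncomputable def bigMat (P₁ P₂ : Matrix (Fin 3) (Fin 4) ℝ) (x y : Fin 3 → ℝ) :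
    Matrix (Fin 6) (Fin 6) ℝ :=
  fun i j =>
    if hi : (i : ℕ) < 3 then
      if hj : (j : ℕ) < 4 then P₁ ⟨(i : ℕ), hi⟩ ⟨(j : ℕ), hj⟩
      else if (j : ℕ) = 4 then x ⟨(i : ℕ), hi⟩ else 0
    else
      if hj : (j : ℕ) < 4 then P₂ ⟨(i : ℕ) - 3, by have := i.isLt; omega⟩ ⟨(j : ℕ), hj⟩
      else if (j : ℕ) = 4 then 0
      else y ⟨(i : ℕ) - 3, by have := i.isLt; omega⟩

/-- `psi P₁ P₂` is the unique 3×3 matrix `F` such that for all `x y : ℝ³`,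
`xᵀ F y = det [P₁ | x | 0; P₂ | 0 | y]`.  (Since the determinant is bilinear in `(x, y)`,
this matrix is obtained by evaluating at pairs of standard basis vectors.) -/
noncomputable def psi (P₁ P₂ : Matrix (Fin 3) (Fin 4) ℝ) : Matrix (Fin 3) (Fin 3) ℝ :=
  fun a b => (bigMat P₁ P₂ (Pi.single a 1) (Pi.single b 1)).det

/-- A camera is a real 3×4 matrix of rank 3. -/
def IsCamera (P : Matrix (Fin 3) (Fin 4) ℝ) : Prop := P.rank = 3

open Module Submodule

section aux
lemma f60 : ((0 : Fin 6) : ℕ) = 0 := rfl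
lemma f61 : ((1 : Fin 6) : ℕ) = 1 := rfl
lemma f62 : ((2 : Fin 6) : ℕ) = 2 := rfl
lemma f63 : ((3 : Fin 6) : ℕ) = 3 := rfl
lemma f64 : ((4 : Fin 6) : ℕ) = 4 := rfl
lemma f65 : ((5 : Fin 6) : ℕ) = 5 := rfl
lemma f40 : ((0 : Fin 4) : ℕ) = 0 := rfl
lemma f41 : ((1 : Fin 4) : ℕ) = 1 := rfl
lemma f42 : ((2 : Fin 4) : ℕ) = 2 := rfl
lemma f43 : ((3 : Fin 4) : ℕ) = 3 := rfl
lemma f30 : ((0 : Fin 3) : ℕ) = 0 := rfl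
lemma f31 : ((1 : Fin 3) : ℕ) = 1 := rfl
lemma f32 : ((2 : Fin 3) : ℕ) = 2 := rfl
lemma g60 : (⟨0, by omega⟩ : Fin 6) = 0 := rfl
lemma g61 : (⟨1, by omega⟩ : Fin 6) = 1 := rfl
lemma g62 : (⟨2, by omega⟩ : Fin 6) = 2 := rfl
lemma g63 : (⟨3, by omega⟩ : Fin 6) = 3 := rfl
lemma g64 : (⟨4, by omega⟩ : Fin 6) = 4 := rfl
lemma g65 : (⟨5, by omega⟩ : Fin 6) = 5 := rfl
lemma g30 : (⟨0, by omega⟩ : Fin 3) = 0 := rfl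
lemma g31 : (⟨1, by omega⟩ : Fin 3) = 1 := rfl
lemma g32 : (⟨2, by omega⟩ : Fin 3) = 2 := rfl
lemma g40 : (⟨0, by omega⟩ : Fin 4) = 0 := rfl
lemma g41 : (⟨1, by omega⟩ : Fin 4) = 1 := rfl
lemma g42 : (⟨2, by omega⟩ : Fin 4) = 2 := rfl
lemma g43 : (⟨3, by omega⟩ : Fin 4) = 3 := rfl

def colX (x : Fin 3 → ℝ) : Fin 6 → ℝ := fun i => if h : (i:ℕ) < 3 then x ⟨i, h⟩ else 0
def colY (y : Fin 3 → ℝ) : Fin 6 → ℝ := fun i =>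
  if h : (i:ℕ) < 3 then 0 else y ⟨(i:ℕ)-3, by have := i.isLt; omega⟩

lemma bigMat_eqY (P₁ P₂ : Matrix (Fin 3) (Fin 4) ℝ) (x y y' : Fin 3 → ℝ) :
    bigMat P₁ P₂ x y = (bigMat P₁ P₂ x y').updateCol 5 (colY y) := by
  funext i j
  fin_cases j <;>
    simp [bigMat, colY, Matrix.updateCol_apply, f60, f61, f62, f63, f64, f65]

lemma bigMat_eqX (P₁ P₂ : Matrix (Fin 3) (Fin 4) ℝ) (x x' y : Fin 3 → ℝ) :
    bigMat P₁ P₂ x y = (bigMat P₁ P₂ x' y).updateCol 4 (colX x) := by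
  funext i j
  fin_cases j <;>
    simp [bigMat, colX, Matrix.updateCol_apply, f60, f61, f62, f63, f64, f65]

lemma bigMat_mulVec_lo (P₁ P₂ : Matrix (Fin 3) (Fin 4) ℝ) (x y : Fin 3 → ℝ) (v : Fin 6 → ℝ)
    (i : Fin 3) :
    (bigMat P₁ P₂ x y *ᵥ v) ⟨(i:ℕ), by omega⟩
      = (P₁ *ᵥ fun j : Fin 4 => v ⟨(j:ℕ), by omega⟩) i + v 4 * x i := by
  fin_cases i <;>
    simp [bigMat, mulVec, dotProduct, Fin.sum_univ_six, Fin.sum_univ_four,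
      f60, f61, f62, f63, f64, f65, f40, f41, f42, f43, f30, f31, f32,
      g60, g61, g62, g63, g64, g65, g30, g31, g32, g40, g41, g42, g43] <;> ring

lemma bigMat_mulVec_hi (P₁ P₂ : Matrix (Fin 3) (Fin 4) ℝ) (x y : Fin 3 → ℝ) (v : Fin 6 → ℝ)
    (i : Fin 3) :
    (bigMat P₁ P₂ x y *ᵥ v) ⟨(i:ℕ)+3, by omega⟩
      = (P₂ *ᵥ fun j : Fin 4 => v ⟨(j:ℕ), by omega⟩) i + v 5 * y i := by
  fin_cases i <;>
    simp [bigMat, mulVec, dotProduct, Fin.sum_univ_six, Fin.sum_univ_four,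
      f60, f61, f62, f63, f64, f65, f40, f41, f42, f43, f30, f31, f32,
      g60, g61, g62, g63, g64, g65, g30, g31, g32, g40, g41, g42, g43] <;> ring

lemma colY_add (y y' : Fin 3 → ℝ) : colY (y + y') = colY y + colY y' := by
  funext i; simp only [colY, Pi.add_apply]; split <;> simp
lemma colY_smul (r : ℝ) (y : Fin 3 → ℝ) : colY (r • y) = r • colY y := by
  funext i; simp only [colY, Pi.smul_apply]; split <;> simp
lemma colX_add (x x' : Fin 3 → ℝ) : colX (x + x') = colX x + colX x' := by
  funext i; simp only [colX, Pi.add_apply]; split <;> simp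
lemma colX_smul (r : ℝ) (x : Fin 3 → ℝ) : colX (r • x) = r • colX x := by
  funext i; simp only [colX, Pi.smul_apply]; split <;> simp

noncomputable def detY (P₁ P₂ : Matrix (Fin 3) (Fin 4) ℝ) (x : Fin 3 → ℝ) :
    (Fin 3 → ℝ) →ₗ[ℝ] ℝ where
  toFun y := (bigMat P₁ P₂ x y).det
  map_add' y y' := by
    rw [bigMat_eqY P₁ P₂ x (y + y') 0, bigMat_eqY P₁ P₂ x y 0, bigMat_eqY P₁ P₂ x y' 0,
      colY_add, det_updateCol_add]
  map_smul' r y := by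
    rw [bigMat_eqY P₁ P₂ x (r • y) 0, bigMat_eqY P₁ P₂ x y 0, colY_smul,
      det_updateCol_smul]; rfl

lemma det_bigMat_sum_y (P₁ P₂ : Matrix (Fin 3) (Fin 4) ℝ) (x y : Fin 3 → ℝ) :
    (bigMat P₁ P₂ x y).det = ∑ b, y b * (bigMat P₁ P₂ x (Pi.single b 1)).det := by
  have hy : y = ∑ b, y b • (Pi.single b 1 : Fin 3 → ℝ) := by
    funext j
    simp [Pi.single_apply, Finset.sum_ite_eq, mul_comm]
  calc (bigMat P₁ P₂ x y).det = detY P₁ P₂ x y := rfl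
    _ = detY P₁ P₂ x (∑ b, y b • (Pi.single b 1 : Fin 3 → ℝ)) := by rw [← hy]
    _ = ∑ b, y b * (bigMat P₁ P₂ x (Pi.single b 1)).det := by
        rw [map_sum]; simp [detY]

noncomputable def detX (P₁ P₂ : Matrix (Fin 3) (Fin 4) ℝ) (y : Fin 3 → ℝ) :
    (Fin 3 → ℝ) →ₗ[ℝ] ℝ where
  toFun x := (bigMat P₁ P₂ x y).det
  map_add' x x' := by
    rw [bigMat_eqX P₁ P₂ (x + x') 0 y, bigMat_eqX P₁ P₂ x 0 y, bigMat_eqX P₁ P₂ x' 0 y,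
      colX_add, det_updateCol_add]
  map_smul' r x := by
    rw [bigMat_eqX P₁ P₂ (r • x) 0 y, bigMat_eqX P₁ P₂ x 0 y, colX_smul,
      det_updateCol_smul]; rfl

lemma det_bigMat_sum_x (P₁ P₂ : Matrix (Fin 3) (Fin 4) ℝ) (x y : Fin 3 → ℝ) :
    (bigMat P₁ P₂ x y).det = ∑ a, x a * (bigMat P₁ P₂ (Pi.single a 1) y).det := by
  have hx : x = ∑ a, x a • (Pi.single a 1 : Fin 3 → ℝ) := by
    funext j
    simp [Pi.single_apply, Finset.sum_ite_eq, mul_comm]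
  calc (bigMat P₁ P₂ x y).det = detX P₁ P₂ y x := rfl
    _ = detX P₁ P₂ y (∑ a, x a • (Pi.single a 1 : Fin 3 → ℝ)) := by rw [← hx]
    _ = ∑ a, x a * (bigMat P₁ P₂ (Pi.single a 1) y).det := by
        rw [map_sum]; simp [detX]

lemma mulVec_psi (P₁ P₂ : Matrix (Fin 3) (Fin 4) ℝ) (y : Fin 3 → ℝ) (a : Fin 3) :
    (psi P₁ P₂ *ᵥ y) a = (bigMat P₁ P₂ (Pi.single a 1) y).det := by
  rw [det_bigMat_sum_y]
  simp [mulVec, dotProduct, psi, mul_comm]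

lemma det_bigMat_of_psi_mulVec_eq_zero (P₁ P₂ : Matrix (Fin 3) (Fin 4) ℝ) (y : Fin 3 → ℝ)
    (h : psi P₁ P₂ *ᵥ y = 0) (x : Fin 3 → ℝ) : (bigMat P₁ P₂ x y).det = 0 := by
  rw [det_bigMat_sum_x]
  refine Finset.sum_eq_zero fun a _ => ?_
  rw [← mulVec_psi, h]; simp

/-- the combined vector (c, s, t) : Fin 6 → ℝ -/
def glue (c : Fin 4 → ℝ) (s t : ℝ) : Fin 6 → ℝ := fun j =>
  if h : (j:ℕ) < 4 then c ⟨(j:ℕ), h⟩ else if (j:ℕ) = 4 then s else t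

lemma glue_four (c : Fin 4 → ℝ) (s t : ℝ) : glue c s t 4 = s := rfl
lemma glue_five (c : Fin 4 → ℝ) (s t : ℝ) : glue c s t 5 = t := rfl
lemma glue_front (c : Fin 4 → ℝ) (s t : ℝ) (j : Fin 4) : glue c s t ⟨(j:ℕ), by omega⟩ = c j := by
  have : ((⟨(j:ℕ), by omega⟩ : Fin 6) : ℕ) < 4 := j.isLt
  simp [glue, this]

lemma bigMat_mulVec_glue (P₁ P₂ : Matrix (Fin 3) (Fin 4) ℝ) (x y : Fin 3 → ℝ)
    (c : Fin 4 → ℝ) (s t : ℝ) :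
    bigMat P₁ P₂ x y *ᵥ glue c s t = 0 ↔ (P₁ *ᵥ c + s • x = 0 ∧ P₂ *ᵥ c + t • y = 0) := by
  have hfront : (fun j : Fin 4 => glue c s t ⟨(j:ℕ), by omega⟩) = c := funext (glue_front c s t)
  constructor
  · intro h
    constructor
    · funext i
      have := congrFun h ⟨(i:ℕ), by omega⟩
      rw [bigMat_mulVec_lo] at this
      simpa [hfront, glue_four, mul_comm] using this
    · funext i
      have := congrFun h ⟨(i:ℕ)+3, by omega⟩
      rw [bigMat_mulVec_hi] at this
      simpa [hfront, glue_five, mul_comm] using this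
  · intro ⟨h1, h2⟩
    funext i
    rcases Nat.lt_or_ge (i:ℕ) 3 with hi | hi
    · have : i = ⟨(⟨(i:ℕ), hi⟩ : Fin 3), by omega⟩ := by ext; rfl
      rw [this, bigMat_mulVec_lo]
      have := congrFun h1 ⟨(i:ℕ), hi⟩
      simpa [hfront, glue_four, mul_comm] using this
    · have : i = ⟨((⟨(i:ℕ)-3, by have := i.isLt; omega⟩ : Fin 3) : ℕ)+3, by
        have := i.isLt; simp; omega⟩ := by ext; simp; omega
      rw [this, bigMat_mulVec_hi]
      have := congrFun h2 ⟨(i:ℕ)-3, by have := i.isLt; omega⟩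
      simpa [hfront, glue_five, mul_comm] using this

lemma glue_eq_zero_iff (c : Fin 4 → ℝ) (s t : ℝ) :
    glue c s t = 0 ↔ c = 0 ∧ s = 0 ∧ t = 0 := by
  constructor
  · intro h
    refine ⟨funext fun j => ?_, ?_, ?_⟩
    · have := congrFun h ⟨(j:ℕ), by omega⟩; rwa [glue_front] at this
    · exact congrFun h 4
    · exact congrFun h 5
  · rintro ⟨rfl, rfl, rfl⟩
    funext j
    by_cases h : (j:ℕ) < 4 <;> simp [glue, h]

/-- every nonzero vector in the kernel of bigMat comes from a glue decomposition -/
lemma exists_glue_of_det_zero (P₁ P₂ : Matrix (Fin 3) (Fin 4) ℝ) (x y : Fin 3 → ℝ)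
    (h : (bigMat P₁ P₂ x y).det = 0) :
    ∃ (c : Fin 4 → ℝ) (s t : ℝ), ¬(c = 0 ∧ s = 0 ∧ t = 0) ∧ P₁ *ᵥ c + s • x = 0 ∧ P₂ *ᵥ c + t • y = 0 := by
  obtain ⟨v, hv, hv0⟩ := Matrix.exists_mulVec_eq_zero_iff.mpr h
  refine ⟨fun j => v ⟨(j:ℕ), by omega⟩, v 4, v 5, ?_, ?_⟩
  · intro ⟨hc, hs, ht⟩
    apply hv
    funext j
    rcases Nat.lt_or_ge (j:ℕ) 4 with hj | hj
    · have := congrFun hc ⟨(j:ℕ), hj⟩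
      simpa using this
    · have hj6 := j.isLt
      have h45 : (j:ℕ) = 4 ∨ (j:ℕ) = 5 := by omega
      rcases h45 with h4 | h5
      · have : j = 4 := by ext; simpa using h4
        rw [this]; simpa using hs
      · have : j = 5 := by ext; simpa using h5
        rw [this]; simpa using ht
  · constructor
    · funext i
      have := congrFun hv0 ⟨(i:ℕ), by omega⟩
      rw [bigMat_mulVec_lo] at this
      simpa [mul_comm] using this
    · funext i
      have := congrFun hv0 ⟨(i:ℕ)+3, by omega⟩
      rw [bigMat_mulVec_hi] at this
      simpa [mul_comm] using this

lemma sum_single (f : Fin 3 → ℝ) : ∑ a, f a • (Pi.single a 1 : Fin 3 → ℝ) = f := by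
  funext j; simp [Pi.single_apply, Finset.sum_ite_eq, mul_comm]

lemma rank_add_ker (A : Matrix (Fin 3) (Fin 3) ℝ) :
    A.rank + Module.finrank ℝ (LinearMap.ker A.mulVecLin) = 3 := by
  have h := LinearMap.finrank_range_add_finrank_ker A.mulVecLin
  rwa [Module.finrank_fin_fun] at h

lemma ker_finrank_one (P : Matrix (Fin 3) (Fin 4) ℝ) (hP : P.rank = 3) :
    Module.finrank ℝ (LinearMap.ker P.mulVecLin) = 1 := by
  have h := LinearMap.finrank_range_add_finrank_ker P.mulVecLin
  rw [Module.finrank_fin_fun] at h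
  have hr : Module.finrank ℝ (LinearMap.range P.mulVecLin) = 3 := hP
  omega


lemma psi_mulVec_kernel (P₁ P₂ : Matrix (Fin 3) (Fin 4) ℝ) (c : Fin 4 → ℝ)
    (hc : P₁ *ᵥ c = 0) : psi P₁ P₂ *ᵥ (P₂ *ᵥ c) = 0 := by
  funext a
  have hdet : (bigMat P₁ P₂ (Pi.single a 1) (P₂ *ᵥ c)).det = 0 := by
    rw [← Matrix.exists_mulVec_eq_zero_iff]
    refine ⟨glue c 0 (-1), ?_, ?_⟩
    · intro h
      obtain ⟨_, _, ht⟩ := (glue_eq_zero_iff _ _ _).mp h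
      norm_num at ht
    · rw [bigMat_mulVec_glue]
      constructor
      · simp [hc]
      · simp
  rw [mulVec_psi, hdet]; rfl

lemma psi_zero_of (P₁ P₂ : Matrix (Fin 3) (Fin 4) ℝ) (c : Fin 4 → ℝ) (hc0 : c ≠ 0)
    (h1 : P₁ *ᵥ c = 0) (h2 : P₂ *ᵥ c = 0) : psi P₁ P₂ = 0 := by
  funext a b
  have hdet : (bigMat P₁ P₂ (Pi.single a 1) (Pi.single b 1)).det = 0 := by
    rw [← Matrix.exists_mulVec_eq_zero_iff]
    refine ⟨glue c 0 0, ?_, ?_⟩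
    · intro h
      exact hc0 ((glue_eq_zero_iff _ _ _).mp h).1
    · rw [bigMat_mulVec_glue]
      exact ⟨by simp [h1], by simp [h2]⟩
  rw [show psi P₁ P₂ a b = (bigMat P₁ P₂ (Pi.single a 1) (Pi.single b 1)).det from rfl, hdet]
  rfl

lemma exists_glue_rel (P₁ P₂ : Matrix (Fin 3) (Fin 4) ℝ) (x y : Fin 3 → ℝ)
    (h : psi P₁ P₂ *ᵥ y = 0) :
    ∃ (c : Fin 4 → ℝ) (s t : ℝ), ¬(c = 0 ∧ s = 0 ∧ t = 0) ∧
      P₁ *ᵥ c + s • x = 0 ∧ P₂ *ᵥ c + t • y = 0 :=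
  exists_glue_of_det_zero P₁ P₂ x y (det_bigMat_of_psi_mulVec_eq_zero P₁ P₂ y h x)

theorem stmt0 (P₁ P₂ : Matrix (Fin 3) (Fin 4) ℝ) :
    (psi P₁ P₂).rank ≤ 2 ∧
      (IsCamera P₁ → IsCamera P₂ →
        LinearMap.ker P₁.mulVecLin ≠ LinearMap.ker P₂.mulVecLin →
        (psi P₁ P₂).rank = 2) := by
  constructor
  · -- rank ≤ 2 always
    obtain ⟨c, hc0, hcker⟩ : ∃ c : Fin 4 → ℝ, c ≠ 0 ∧ P₁ *ᵥ c = 0 := by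
      have hne : LinearMap.ker P₁.mulVecLin ≠ ⊥ := by
        intro hbot
        have h1 := LinearMap.finrank_range_add_finrank_ker P₁.mulVecLin
        rw [hbot, finrank_bot, Module.finrank_fin_fun] at h1
        have h2 := Submodule.finrank_le (LinearMap.range P₁.mulVecLin)
        rw [Module.finrank_fin_fun] at h2
        omega
      obtain ⟨c, hc, hc0⟩ := (Submodule.ne_bot_iff _).mp hne
      exact ⟨c, hc0, by simpa [Matrix.mulVecLin_apply] using hc⟩
    by_cases h2 : P₂ *ᵥ c = 0
    · rw [psi_zero_of P₁ P₂ c hc0 hcker h2, Matrix.rank_zero]; omega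
    · have hker : P₂ *ᵥ c ∈ LinearMap.ker (psi P₁ P₂).mulVecLin := by
        simp [LinearMap.mem_ker, Matrix.mulVecLin_apply, psi_mulVec_kernel P₁ P₂ c hcker]
      have hle : span ℝ {P₂ *ᵥ c} ≤ LinearMap.ker (psi P₁ P₂).mulVecLin := by
        rw [span_le, Set.singleton_subset_iff]; exact hker
      have h1 : 1 ≤ finrank ℝ (LinearMap.ker (psi P₁ P₂).mulVecLin) := by
        have := Submodule.finrank_mono hle
        rwa [finrank_span_singleton h2] at this
      have := rank_add_ker (psi P₁ P₂)
      omega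
  · intro hP1 hP2 hkerne
    have hk1 := ker_finrank_one P₁ hP1
    have hk2 := ker_finrank_one P₂ hP2
    obtain ⟨c₁, hc₁mem, hc₁0⟩ : ∃ c ∈ LinearMap.ker P₁.mulVecLin, c ≠ 0 := by
      apply (Submodule.ne_bot_iff _).mp
      intro hbot; rw [hbot, finrank_bot] at hk1; omega
    have hcker1 : P₁ *ᵥ c₁ = 0 := by simpa [Matrix.mulVecLin_apply] using hc₁mem
    have hspan1 : span ℝ {c₁} = LinearMap.ker P₁.mulVecLin :=
      Submodule.eq_of_le_of_finrank_eq
        (by rw [span_le, Set.singleton_subset_iff]; exact hc₁mem)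
        (by rw [finrank_span_singleton hc₁0, hk1])
    have he : P₂ *ᵥ c₁ ≠ 0 := by
      intro h
      apply hkerne
      have hmem2 : c₁ ∈ LinearMap.ker P₂.mulVecLin := by
        simpa [LinearMap.mem_ker, Matrix.mulVecLin_apply] using h
      have hspan2 : span ℝ {c₁} = LinearMap.ker P₂.mulVecLin :=
        Submodule.eq_of_le_of_finrank_eq
          (by rw [span_le, Set.singleton_subset_iff]; exact hmem2)
          (by rw [finrank_span_singleton hc₁0, hk2])
      rw [← hspan1, ← hspan2]
    set e : Fin 3 → ℝ := P₂ *ᵥ c₁ with he_def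
    have heker : psi P₁ P₂ *ᵥ e = 0 := psi_mulVec_kernel P₁ P₂ c₁ hcker1
    have hkerpsi : LinearMap.ker (psi P₁ P₂).mulVecLin = span ℝ {e} := by
      apply le_antisymm
      · intro y hy
        have hy0 : psi P₁ P₂ *ᵥ y = 0 := by simpa [Matrix.mulVecLin_apply] using hy
        by_contra hy'
        have hyne : y ≠ 0 := fun h => hy' (h ▸ zero_mem _)
        have key : ∀ x : Fin 3 → ℝ,
            ∃ (c : Fin 4 → ℝ) (μ : ℝ), P₁ *ᵥ c = x ∧ P₂ *ᵥ c = μ • y := by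
          intro x
          obtain ⟨c, s, t, hne, hx1, hx2⟩ := exists_glue_rel P₁ P₂ x y hy0
          by_cases hs : s = 0
          · exfalso
            have hckerP1 : P₁ *ᵥ c = 0 := by simpa [hs] using hx1
            have hcmem : c ∈ span ℝ {c₁} := by
              rw [hspan1]
              simpa [LinearMap.mem_ker, Matrix.mulVecLin_apply] using hckerP1
            obtain ⟨lam, hlam⟩ := mem_span_singleton.mp hcmem
            have hPc : P₂ *ᵥ c = lam • e := by rw [← hlam, mulVec_smul]
            by_cases ht : t = 0
            · have hcne : c ≠ 0 := fun h => hne ⟨h, hs, ht⟩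
              have hlamne : lam ≠ 0 := fun h => hcne (by rw [← hlam, h, zero_smul])
              have hz : P₂ *ᵥ c = 0 := by simpa [ht] using hx2
              rw [hPc] at hz
              exact he ((smul_eq_zero.mp hz).resolve_left hlamne)
            · apply hy'
              rw [mem_span_singleton]
              refine ⟨-(t⁻¹ * lam), ?_⟩
              rw [hPc] at hx2
              have h3 : t • y = -(lam • e) := eq_neg_of_add_eq_zero_right hx2
              calc (-(t⁻¹ * lam)) • e = t⁻¹ • (-(lam • e)) := by
                    rw [neg_smul, ← smul_smul, ← smul_neg]
                _ = t⁻¹ • (t • y) := by rw [h3]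
                _ = y := by rw [smul_smul, inv_mul_cancel₀ ht, one_smul]
          · refine ⟨(-s⁻¹) • c, s⁻¹ * t, ?_, ?_⟩
            · rw [mulVec_smul]
              have h3 : P₁ *ᵥ c = -(s • x) := eq_neg_of_add_eq_zero_left hx1
              rw [h3, smul_neg, neg_smul, neg_neg, smul_smul, inv_mul_cancel₀ hs, one_smul]
            · rw [mulVec_smul]
              have h3 : P₂ *ᵥ c = -(t • y) := eq_neg_of_add_eq_zero_left hx2
              rw [h3, smul_neg, neg_smul, neg_neg, smul_smul]
        choose cf μf hcf1 hcf2 using key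
        have hrange : ∀ z : Fin 4 → ℝ, P₂ *ᵥ z ∈ span ℝ ({y, e} : Set (Fin 3 → ℝ)) := by
          intro z
          set w : Fin 4 → ℝ := z - ∑ a, (P₁ *ᵥ z) a • cf (Pi.single a 1) with hw
          have hw1 : P₁ *ᵥ w = 0 := by
            rw [hw, mulVec_sub]
            rw [show P₁ *ᵥ (∑ a, (P₁ *ᵥ z) a • cf (Pi.single a 1))
                = ∑ a, (P₁ *ᵥ z) a • (P₁ *ᵥ cf (Pi.single a 1)) by
              rw [← Matrix.mulVecLin_apply, map_sum]
              simp [Matrix.mulVecLin_apply, mulVec_smul]]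
            simp only [hcf1]
            rw [sum_single]
            simp
          have hwmem : w ∈ span ℝ {c₁} := by
            rw [hspan1]
            simpa [LinearMap.mem_ker, Matrix.mulVecLin_apply] using hw1
          obtain ⟨lam, hlam⟩ := mem_span_singleton.mp hwmem
          have hz : P₂ *ᵥ z = lam • e + ∑ a, (P₁ *ᵥ z) a • (μf (Pi.single a 1) • y) := by
            have hzw : z = w + ∑ a, (P₁ *ᵥ z) a • cf (Pi.single a 1) := by
              rw [hw]; abel
            conv_lhs => rw [hzw, mulVec_add]
            congr 1
            · rw [← hlam, mulVec_smul]
            · rw [show P₂ *ᵥ (∑ a, (P₁ *ᵥ z) a • cf (Pi.single a 1))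
                  = ∑ a, (P₁ *ᵥ z) a • (P₂ *ᵥ cf (Pi.single a 1)) by
                rw [← Matrix.mulVecLin_apply, map_sum]
                simp [Matrix.mulVecLin_apply, mulVec_smul]]
              simp only [hcf2]
          rw [hz]
          refine add_mem (smul_mem _ _ (subset_span (by simp)))
            (sum_mem fun a _ => smul_mem _ _ (smul_mem _ _ (subset_span (by simp))))
        have htop : span ℝ ({y, e} : Set (Fin 3 → ℝ)) = ⊤ := by
          have hr2 : LinearMap.range P₂.mulVecLin = ⊤ := by
            apply Submodule.eq_top_of_finrank_eq
            rw [Module.finrank_fin_fun]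
            exact hP2
          rw [eq_top_iff]
          intro v _
          have : v ∈ LinearMap.range P₂.mulVecLin := by rw [hr2]; trivial
          obtain ⟨z, rfl⟩ := this
          exact hrange z
        have h1 : finrank ℝ (span ℝ ({y, e} : Set (Fin 3 → ℝ))) = 3 := by
          rw [htop, finrank_top, Module.finrank_fin_fun]
        have h2 : finrank ℝ (span ℝ ({y, e} : Set (Fin 3 → ℝ))) ≤ 2 := by
          rw [show ({y, e} : Set (Fin 3 → ℝ)) = insert y {e} from rfl, span_insert]
          have hsum := Submodule.finrank_sup_add_finrank_inf_eq (span ℝ {y}) (span ℝ ({e} : Set (Fin 3 → ℝ)))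
          rw [finrank_span_singleton hyne, finrank_span_singleton he] at hsum
          omega
        omega
      · rw [span_le, Set.singleton_subset_iff]
        exact LinearMap.mem_ker.mpr (by simpa [Matrix.mulVecLin_apply] using heker)
    have hfin := rank_add_ker (psi P₁ P₂)
    rw [hkerpsi, finrank_span_singleton he] at hfin
    omega
end aux
end

section
/- Let P₁ and P₂ be cameras with distinct centers and let F be a real 3×3 matrix of rank 2. Then there exists a nonzero real scalar λ with F = λ ψ(P₁,P₂) if and only if the 4×4 matrix P₁ᵀ F P₂ is skew-symmetric. -/
open Matrix

/-!
P₁ᵀ ψ P₂ is skew: uᵀ P₁ᵀ ψ P₂ u = det [P₁ | P₁u | 0; P₂ | 0 | P₂u] vanishes, since the last column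
equals ∑ₖ uₖ (column k) − (column 4).

Conversely, let c₁, c₂ span the centers. A skew matrix of the form P₁ᵀ G P₂ kills c₂ (as P₂c₂ = 0)
and, by skewness, c₁. Completing c₁, c₂ to a basis c₁, c₂, w₃, w₄ of ℝ⁴, such a matrix is determined
by its single entry w₃ᵀ (P₁ᵀ G P₂) w₄. For G = ψ this entry is det [P₁ | P₁w₃ | 0; P₂ | 0 | P₂w₄],
which is nonzero because c₁, c₂, w₃, w₄ are independent. Hence P₁ᵀ F P₂ = μ P₁ᵀ ψ P₂, and F = μ ψ
because G ↦ P₁ᵀ G P₂ is injective for cameras; μ ≠ 0 as F ≠ 0.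
-/

open Module

section SkewMatrix

variable {K n : Type*} [Field K] [Fintype n] {C : Matrix n n K}

theorem dotProduct_mulVec_eq_neg_of_transpose_eq_neg (hC : Cᵀ = -C) (u v : n → K) :
    u ⬝ᵥ C *ᵥ v = -(v ⬝ᵥ C *ᵥ u) := by
  rw [dotProduct_mulVec, ← mulVec_transpose, hC, neg_mulVec, neg_dotProduct, dotProduct_comm]

theorem dotProduct_mulVec_self_of_transpose_eq_neg [CharZero K] (hC : Cᵀ = -C) (u : n → K) :
    u ⬝ᵥ C *ᵥ u = 0 :=
  CharZero.eq_neg_self_iff.mp (dotProduct_mulVec_eq_neg_of_transpose_eq_neg hC u u)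

variable [CharZero K] [DecidableEq n] {ι : Type*}

theorem eq_zero_of_transpose_eq_neg_of_basis (b : Basis (ι ⊕ Fin 2) K (n → K)) (hC : Cᵀ = -C)
    (hker : ∀ i, C *ᵥ b (.inl i) = 0) (h : b (.inr 0) ⬝ᵥ C *ᵥ b (.inr 1) = 0) : C = 0 := by
  have hskew := dotProduct_mulVec_eq_neg_of_transpose_eq_neg hC
  apply (toLinearMap₂' K : Matrix n n K ≃ₗ[K] (n → K) →ₗ[K] (n → K) →ₗ[K] K).injective
  refine LinearMap.ext_basis b b fun i j => ?_
  rw [toLinearMap₂'_apply', map_zero, LinearMap.zero_apply, LinearMap.zero_apply]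
  rcases i with i | i
  · rw [hskew, hker, dotProduct_zero, neg_zero]
  rcases j with j | j
  · rw [hker, dotProduct_zero]
  fin_cases i <;> fin_cases j
  · exact dotProduct_mulVec_self_of_transpose_eq_neg hC _
  · exact h
  · rw [hskew]; exact neg_eq_zero.mpr h
  · exact dotProduct_mulVec_self_of_transpose_eq_neg hC _

theorem exists_eq_smul_of_transpose_eq_neg_of_basis (b : Basis (ι ⊕ Fin 2) K (n → K))
    {B B' : Matrix n n K} (hB : Bᵀ = -B) (hB' : B'ᵀ = -B')
    (hBb : ∀ i, B *ᵥ b (.inl i) = 0) (hB'b : ∀ i, B' *ᵥ b (.inl i) = 0)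
    (hB'0 : b (.inr 0) ⬝ᵥ B' *ᵥ b (.inr 1) ≠ 0) : ∃ μ : K, B = μ • B' := by
  set μ := (b (.inr 0) ⬝ᵥ B *ᵥ b (.inr 1)) / (b (.inr 0) ⬝ᵥ B' *ᵥ b (.inr 1))
  refine ⟨μ, sub_eq_zero.mp (eq_zero_of_transpose_eq_neg_of_basis b ?_ (fun i => ?_) ?_)⟩
  · rw [transpose_sub, transpose_smul, hB, hB', smul_neg, neg_sub_neg, neg_sub]
  · rw [sub_mulVec, smul_mulVec, hBb, hB'b, smul_zero, sub_zero]
  · rw [sub_mulVec, dotProduct_sub, smul_mulVec, dotProduct_smul, smul_eq_mul,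
      div_mul_cancel₀ _ hB'0, sub_self]

end SkewMatrix

theorem transpose_eq_neg_of_dotProduct_mulVec_self {R n : Type*} [CommRing R] [Fintype n]
    [DecidableEq n] {C : Matrix n n R} (h : ∀ u, u ⬝ᵥ C *ᵥ u = 0) : Cᵀ = -C := by
  have hC : (toLinearMap₂' R C).IsAlt := fun u => by rw [toLinearMap₂'_apply', h]
  ext k l
  simpa [toLinearMap₂'_apply'] using (hC.neg (Pi.single k 1) (Pi.single l 1)).symm

section TransposeMulMul

variable {R m n m' n' : Type*} [CommRing R] [Fintype m] [Fintype n] [Fintype m']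

theorem dotProduct_transpose_mul_mul_mulVec [Fintype n'] (A : Matrix m n R)
    (G : Matrix m m' R) (B : Matrix m' n' R) (u : n → R) (v : n' → R) :
    u ⬝ᵥ (Aᵀ * G * B) *ᵥ v = (A *ᵥ u) ⬝ᵥ G *ᵥ (B *ᵥ v) := by
  rw [← mulVec_mulVec, ← mulVec_mulVec, dotProduct_mulVec, vecMul_transpose]

theorem transpose_mul_mul_mulVec_eq_zero {A : Matrix m n R} {G : Matrix m m' R}
    {B : Matrix m' n R} (hC : (Aᵀ * G * B)ᵀ = -(Aᵀ * G * B)) {c : n → R}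
    (hc : A *ᵥ c = 0 ∨ B *ᵥ c = 0) : (Aᵀ * G * B) *ᵥ c = 0 := by
  rcases hc with hA | hB
  · rw [← neg_eq_zero, ← neg_mulVec, ← hC, transpose_mul, transpose_mul, transpose_transpose,
      ← mulVec_mulVec, ← mulVec_mulVec, hA, mulVec_zero, mulVec_zero]
  · rw [← mulVec_mulVec, hB, mulVec_zero]

end TransposeMulMul

namespace Matrix

variable {m n K : Type*} [Fintype n] [Field K]

theorem exists_ker_mulVecLin_eq_span_singleton (P : Matrix m n K)
    (h : P.rank + 1 = Fintype.card n) : ∃ c ≠ 0, LinearMap.ker P.mulVecLin = K ∙ c := by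
  have hker : finrank K (LinearMap.ker P.mulVecLin) = 1 := by
    have := P.mulVecLin.finrank_range_add_finrank_ker
    rw [finrank_fintype_fun_eq_card] at this
    rw [rank] at h
    omega
  obtain ⟨⟨c, hc⟩, hc0, -⟩ := finrank_eq_one_iff'.mp hker
  have hc0 : c ≠ 0 := by simpa using hc0
  exact ⟨c, hc0, eq_span_singleton_of_mem_of_finrank_eq_one hker hc hc0⟩

theorem exists_mul_eq_one_of_rank_eq [Fintype m] [DecidableEq m] (P : Matrix m n K)
    (h : P.rank = Fintype.card m) : ∃ Q : Matrix n m K, P * Q = 1 := by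
  classical
  have hrange : LinearMap.range P.mulVecLin = ⊤ :=
    Submodule.eq_top_of_finrank_eq (by rw [finrank_fintype_fun_eq_card]; exact h)
  obtain ⟨g, hg⟩ := P.mulVecLin.exists_rightInverse_of_surjective hrange
  refine ⟨LinearMap.toMatrix' g, ?_⟩
  have := congrArg LinearMap.toMatrix' hg
  rwa [LinearMap.toMatrix'_comp, ← toLin'_apply', LinearMap.toMatrix'_toLin',
    LinearMap.toMatrix'_id] at this

theorem transpose_mul_mul_injective {m' n' : Type*} [Fintype m] [Fintype m'] [Fintype n']
    [DecidableEq m] [DecidableEq m'] {A : Matrix m n K} {B : Matrix m' n' K}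
    (hA : A.rank = Fintype.card m) (hB : B.rank = Fintype.card m') :
    Function.Injective fun G : Matrix m m' K => Aᵀ * G * B := by
  obtain ⟨QA, hQA⟩ := A.exists_mul_eq_one_of_rank_eq hA
  obtain ⟨QB, hQB⟩ := B.exists_mul_eq_one_of_rank_eq hB
  have hcancel (G : Matrix m m' K) : QAᵀ * (Aᵀ * G * B) * QB = G := by
    calc QAᵀ * (Aᵀ * G * B) * QB = (A * QA)ᵀ * G * (B * QB) := by
          simp only [transpose_mul, Matrix.mul_assoc]
      _ = G := by rw [hQA, hQB, transpose_one, Matrix.one_mul, Matrix.mul_one]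
  intro G G' h
  rw [← hcancel G, ← hcancel G']
  exact congrArg (fun M => QAᵀ * M * QB) h

end Matrix

theorem Module.Basis.exists_sum_fin_extend {K V ι : Type*} [Field K] [AddCommGroup V] [Module K V]
    [FiniteDimensional K V] [Fintype ι] {v : ι → V} (hv : LinearIndependent K v) {k : ℕ}
    (hk : finrank K V = Fintype.card ι + k) :
    ∃ b : Basis (ι ⊕ Fin k) K V, ∀ i, b (.inl i) = v i := by
  let b := Basis.sumExtend hv
  have : Fintype (Basis.sumExtendIndex hv) := FiniteDimensional.fintypeBasisIndex b |>.sumRight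
  have hcard : Fintype.card (Basis.sumExtendIndex hv) = k := by
    have := Module.finrank_eq_card_basis b
    rw [Fintype.card_sum] at this; omega
  refine ⟨b.reindex (Equiv.sumCongr (Equiv.refl ι) (Fintype.equivFinOfCardEq hcard)), fun i => ?_⟩
  simp only [Basis.reindex_apply, b, Basis.sumExtend, Basis.extend_apply_self]
  rfl

theorem linearIndependent_pair_of_span_singleton_ne {K V : Type*} [Field K] [AddCommGroup V]
    [Module K V] {x y : V} (hx : x ≠ 0) (hy : y ≠ 0) (h : K ∙ x ≠ K ∙ y) :
    LinearIndependent K ![x, y] := by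
  rw [LinearIndependent.pair_iff' hx]
  rintro a rfl
  have ha : a ≠ 0 := by rintro rfl; exact hy (zero_smul K x)
  exact h (Submodule.span_singleton_smul_eq (Ne.isUnit ha) x).symm

section DetUpdateCol

variable {R n : Type*} [CommRing R] [Fintype n] [DecidableEq n]

def detUpdateCol₂ (M : Matrix n n R) {j j' : n} (h : j ≠ j') :
    (n → R) →ₗ[R] (n → R) →ₗ[R] R :=
  LinearMap.mk₂ R (fun u v => (updateCol (updateCol M j u) j' v).det)
    (fun u u' v => by simp only [updateCol_comm M h _ v, det_updateCol_add])
    (fun c u v => by simp only [updateCol_comm M h _ v, det_updateCol_smul, smul_eq_mul])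
    (fun u v v' => det_updateCol_add _ _ _ _)
    (fun c u v => det_updateCol_smul _ _ _ _)

@[simp]
theorem detUpdateCol₂_apply (M : Matrix n n R) {j j' : n} (h : j ≠ j') (u v : n → R) :
    detUpdateCol₂ M h u v = (updateCol (updateCol M j u) j' v).det :=
  rfl

end DetUpdateCol

section BigMat

def padTop : (Fin 3 → ℝ) →ₗ[ℝ] Fin 6 → ℝ where
  toFun x i := if h : (i : ℕ) < 3 then x ⟨i, h⟩ else 0
  map_add' x x' := by ext i; by_cases h : (i : ℕ) < 3 <;> simp [h]
  map_smul' c x := by ext i; by_cases h : (i : ℕ) < 3 <;> simp [h]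

def padBot : (Fin 3 → ℝ) →ₗ[ℝ] Fin 6 → ℝ where
  toFun y i := if h : (i : ℕ) < 3 then 0 else y ⟨i - 3, by omega⟩
  map_add' y y' := by ext i; by_cases h : (i : ℕ) < 3 <;> simp [h]
  map_smul' c y := by ext i; by_cases h : (i : ℕ) < 3 <;> simp [h]

theorem padTop_add_padBot_eq_zero_iff {x y : Fin 3 → ℝ} :
    padTop x + padBot y = 0 ↔ x = 0 ∧ y = 0 := by
  refine ⟨fun h => ⟨funext fun r => ?_, funext fun r => ?_⟩, fun ⟨hx, hy⟩ => by simp [hx, hy]⟩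
  · simpa [padTop, padBot] using congrFun h (Fin.castAdd 3 r)
  · simpa [padTop, padBot] using congrFun h (Fin.natAdd 3 r)

variable (P₁ P₂ : Matrix (Fin 3) (Fin 4) ℝ)

theorem bigMat_eq_updateCol (x y : Fin 3 → ℝ) :
    bigMat P₁ P₂ x y = updateCol (updateCol (bigMat P₁ P₂ 0 0) 4 (padTop x)) 5 (padBot y) := by
  ext i j
  fin_cases j <;> simp [bigMat, padTop, padBot]

theorem det_bigMat (x y : Fin 3 → ℝ) : (bigMat P₁ P₂ x y).det = x ⬝ᵥ psi P₁ P₂ *ᵥ y := by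
  have key : (detUpdateCol₂ (bigMat P₁ P₂ 0 0) (by decide : (4 : Fin 6) ≠ 5)).compl₁₂
      padTop padBot = toLinearMap₂' ℝ (psi P₁ P₂) :=
    LinearMap.ext_basis (Pi.basisFun ℝ _) (Pi.basisFun ℝ _) fun a b => by
      rw [Pi.basisFun_apply, Pi.basisFun_apply, LinearMap.compl₁₂_apply, detUpdateCol₂_apply,
        toLinearMap₂'_apply', single_dotProduct, one_mul, mulVec_single_one, col_apply, psi,
        ← bigMat_eq_updateCol]
  rw [← toLinearMap₂'_apply', ← key, LinearMap.compl₁₂_apply, detUpdateCol₂_apply,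
    bigMat_eq_updateCol]

theorem det_bigMat_mulVec_self (u : Fin 4 → ℝ) :
    (bigMat P₁ P₂ (P₁ *ᵥ u) (P₂ *ᵥ u)).det = 0 := by
  set M := bigMat P₁ P₂ (P₁ *ᵥ u) (P₂ *ᵥ u)
  let c : Fin 6 → ℝ := ![u 0, u 1, u 2, u 3, -1, 0]
  have hcol : (fun i => ∑ k, c k • M i k) = fun i => M i 5 := by
    funext i; fin_cases i <;> simp [M, c, bigMat, Fin.sum_univ_succ, mulVec, dotProduct] <;> ring
  have := det_updateCol_sum M 5 c
  rwa [hcol, updateCol_eq_self, show c 5 = 0 from rfl, zero_smul] at this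

theorem bigMat_mulVec (x y : Fin 3 → ℝ) (v : Fin 6 → ℝ) :
    bigMat P₁ P₂ x y *ᵥ v = padTop (P₁ *ᵥ (fun j => v (Fin.castAdd 2 j)) + v 4 • x) +
      padBot (P₂ *ᵥ (fun j => v (Fin.castAdd 2 j)) + v 5 • y) := by
  funext i
  fin_cases i <;> simp [bigMat, padTop, padBot, mulVec, dotProduct, Fin.sum_univ_succ] <;> ring


theorem transpose_mul_psi_mul_transpose_eq_neg :
    (P₁ᵀ * psi P₁ P₂ * P₂)ᵀ = -(P₁ᵀ * psi P₁ P₂ * P₂) :=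
  transpose_eq_neg_of_dotProduct_mulVec_self fun u => by
    rw [dotProduct_transpose_mul_mul_mulVec, ← det_bigMat, det_bigMat_mulVec_self]

end BigMat

theorem det_bigMat_ne_zero {P₁ P₂ : Matrix (Fin 3) (Fin 4) ℝ}
    (b : Basis (Fin 2 ⊕ Fin 2) ℝ (Fin 4 → ℝ))
    (h₁ : LinearMap.ker P₁.mulVecLin ≤ ℝ ∙ b (.inl 0))
    (h₂ : LinearMap.ker P₂.mulVecLin ≤ ℝ ∙ b (.inl 1)) :
    (bigMat P₁ P₂ (P₁ *ᵥ b (.inr 0)) (P₂ *ᵥ b (.inr 1))).det ≠ 0 := by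
  intro hdet
  obtain ⟨v, hv0, hv⟩ := exists_mulVec_eq_zero_iff.mpr hdet
  set u : Fin 4 → ℝ := fun j => v (Fin.castAdd 2 j)
  rw [bigMat_mulVec, padTop_add_padBot_eq_zero_iff] at hv
  obtain ⟨a₁, ha₁⟩ := Submodule.mem_span_singleton.mp <| h₁ (x := u + v 4 • b (.inr 0)) <| by
    rw [LinearMap.mem_ker, mulVecLin_apply, mulVec_add, mulVec_smul]; exact hv.1
  obtain ⟨a₂, ha₂⟩ := Submodule.mem_span_singleton.mp <| h₂ (x := u + v 5 • b (.inr 1)) <| by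
    rw [LinearMap.mem_ker, mulVecLin_apply, mulVec_add, mulVec_smul]; exact hv.2
  have hcoeff := Fintype.linearIndependent_iff.mp b.linearIndependent
    (Sum.elim ![a₁, -a₂] ![-v 4, v 5]) <| by
      simp only [Fintype.sum_sum_type, Fin.sum_univ_two, Sum.elim_inl, Sum.elim_inr,
        cons_val_zero, cons_val_one, neg_smul]
      linear_combination (norm := module) ha₁ - ha₂
  have h₄ : v 4 = 0 := by simpa using hcoeff (.inr 0)
  have h₅ : v 5 = 0 := by simpa using hcoeff (.inr 1)
  have hu : u = 0 := by
    have ha : a₁ = 0 := by simpa using hcoeff (.inl 0)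
    rw [ha, h₄, zero_smul, zero_smul, add_zero] at ha₁
    exact ha₁.symm
  refine hv0 (funext fun i => ?_)
  fin_cases i
  exacts [congrFun hu 0, congrFun hu 1, congrFun hu 2, congrFun hu 3, h₄, h₅]

theorem IsCamera.exists_ker_eq_span_singleton {P : Matrix (Fin 3) (Fin 4) ℝ} (hP : IsCamera P) :
    ∃ c ≠ 0, LinearMap.ker P.mulVecLin = ℝ ∙ c :=
  P.exists_ker_mulVecLin_eq_span_singleton (by rw [(hP : P.rank = 3)]; rfl)

theorem exists_basis_ker_eq_span_inl {P₁ P₂ : Matrix (Fin 3) (Fin 4) ℝ} (h₁ : IsCamera P₁)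
    (h₂ : IsCamera P₂) (hcenters : LinearMap.ker P₁.mulVecLin ≠ LinearMap.ker P₂.mulVecLin) :
    ∃ b : Basis (Fin 2 ⊕ Fin 2) ℝ (Fin 4 → ℝ), LinearMap.ker P₁.mulVecLin = ℝ ∙ b (.inl 0) ∧
      LinearMap.ker P₂.mulVecLin = ℝ ∙ b (.inl 1) := by
  obtain ⟨c₁, hc₁0, hc₁⟩ := h₁.exists_ker_eq_span_singleton
  obtain ⟨c₂, hc₂0, hc₂⟩ := h₂.exists_ker_eq_span_singleton
  rw [hc₁, hc₂] at hcenters ⊢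
  obtain ⟨b, hb⟩ := Basis.exists_sum_fin_extend (k := 2)
    (linearIndependent_pair_of_span_singleton_ne hc₁0 hc₂0 hcenters) (by simp)
  exact ⟨b, by rw [hb]; rfl, by rw [hb]; rfl⟩

theorem stmt1 (P₁ P₂ : Matrix (Fin 3) (Fin 4) ℝ) (F : Matrix (Fin 3) (Fin 3) ℝ)
    (h₁ : IsCamera P₁) (h₂ : IsCamera P₂)
    (hcenters : LinearMap.ker P₁.mulVecLin ≠ LinearMap.ker P₂.mulVecLin)
    (hF : F.rank = 2) :
    (∃ lam : ℝ, lam ≠ 0 ∧ F = lam • psi P₁ P₂) ↔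
      (P₁ᵀ * F * P₂)ᵀ = -(P₁ᵀ * F * P₂) := by
  have hψ := transpose_mul_psi_mul_transpose_eq_neg P₁ P₂
  refine ⟨fun ⟨lam, _, hFψ⟩ => by
    rw [hFψ, Matrix.mul_smul, Matrix.smul_mul, transpose_smul, hψ, smul_neg], fun hskew => ?_⟩
  obtain ⟨b, hb₁, hb₂⟩ := exists_basis_ker_eq_span_inl h₁ h₂ hcenters
  have hker (G : Matrix (Fin 3) (Fin 3) ℝ) (hG : (P₁ᵀ * G * P₂)ᵀ = -(P₁ᵀ * G * P₂)) (i : Fin 2) :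
      (P₁ᵀ * G * P₂) *ᵥ b (.inl i) = 0 := by
    refine transpose_mul_mul_mulVec_eq_zero hG ?_
    fin_cases i
    · exact .inl (LinearMap.mem_ker.mp (hb₁ ▸ Submodule.mem_span_singleton_self _))
    · exact .inr (LinearMap.mem_ker.mp (hb₂ ▸ Submodule.mem_span_singleton_self _))
  obtain ⟨μ, hμ⟩ := exists_eq_smul_of_transpose_eq_neg_of_basis b hskew hψ (hker F hskew)
    (hker _ hψ) (by
      rw [dotProduct_transpose_mul_mul_mulVec, ← det_bigMat]
      exact det_bigMat_ne_zero b hb₁.le hb₂.le)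
  have hFμ : F = μ • psi P₁ P₂ :=
    transpose_mul_mul_injective (h₁ : P₁.rank = 3) (h₂ : P₂.rank = 3)
      (by simpa only [Matrix.mul_smul, Matrix.smul_mul] using hμ)
  refine ⟨μ, fun hμ0 => ?_, hFμ⟩
  rw [hFμ, hμ0, zero_smul, rank_zero] at hF
  exact absurd hF (by norm_num)
end

section
/- Let P₁,…,Pₙ be cameras, H ∈ GL₄(ℝ), and H₁,…,Hₙ ∈ GL₃(ℝ). Then for all i, j there exists a nonzero real scalar μ with ψ(Hᵢ⁻¹PᵢH, Hⱼ⁻¹PⱼH) = μ · Hᵢᵀ ψ(Pᵢ,Pⱼ) Hⱼ. Consequently, for any family {F^{ij}} of fundamental matrices and any H₁,…,Hₙ ∈ GL₃(ℝ), the family {F^{ij}} is compatible if and only if the family {G^{ij}} with G^{ij} := Hᵢᵀ F^{ij} Hⱼ is compatible. -/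
open Matrix

/-- A family of matrices `F i j`, indexed by the edges `E`, is compatible if there are
cameras `P i` and nonzero scalars `lam i j` with `lam i j • F i j = psi (P i) (P j)`
for every indexing pair. -/
def Compatible (n : ℕ) (E : Fin n → Fin n → Prop)
    (F : Fin n → Fin n → Matrix (Fin 3) (Fin 3) ℝ) : Prop :=
  ∃ (P : Fin n → Matrix (Fin 3) (Fin 4) ℝ) (lam : Fin n → Fin n → ℝ),
    (∀ i, IsCamera (P i)) ∧
      ∀ i j, E i j → lam i j ≠ 0 ∧ lam i j • F i j = psi (P i) (P j)

/-!
`ψ(P₁, P₂)` is the matrix of the bilinear form `(x, y) ↦ det [P₁ x 0; P₂ 0 y]`. Multiplying the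
6×6 matrix on the left by `diag(A, B)` replaces `(P₁, P₂, x, y)` by `(A P₁, B P₂, A x, B y)`, and
multiplying it on the right by `diag(K, 1)` replaces `(P₁, P₂)` by `(P₁ K, P₂ K)`. Hence
`Aᵀ ψ(A Q₁, B Q₂) B = det A det B • ψ(Q₁, Q₂)` and `ψ(Q₁ K, Q₂ K) = det K • ψ(Q₁, Q₂)`, which gives
the first claim. For the second, a solution `Pᵢ` for `{F^{ij}}` yields the solution `Hᵢ⁻¹ Pᵢ` for
`{Hᵢᵀ F^{ij} Hⱼ}`, and `Hᵢ⁻¹` undoes the transformation.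
-/

namespace Matrix

theorem det_updateCol_sum_smul {n ι R : Type*} [Fintype n] [DecidableEq n] [CommRing R]
    (M : Matrix n n R) (j : n) (s : Finset ι) (c : ι → R) (v : ι → n → R) :
    (M.updateCol j (∑ a ∈ s, c a • v a)).det = ∑ a ∈ s, c a * (M.updateCol j (v a)).det := by
  have h (w : n → R) :
      (M.updateCol j w).det = detRowAlternating (Function.update (of.symm Mᵀ) j w) := by
    rw [← det_transpose, ← updateRow_transpose]
    rfl
  rw [h, AlternatingMap.map_update_sum]
  simp only [AlternatingMap.map_update_smul, h, smul_eq_mul]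

theorem transpose_mul_mul_apply {l m n R : Type*} [Fintype l] [Fintype m] [Fintype n]
    [DecidableEq l] [DecidableEq n] [CommSemiring R]
    (A : Matrix m l R) (M : Matrix m n R) (B : Matrix n n R) (a : l) (b : n) :
    (Aᵀ * M * B) a b = (A *ᵥ Pi.single a 1) ⬝ᵥ (M *ᵥ (B *ᵥ Pi.single b 1)) := by
  rw [← vecMul_transpose, ← dotProduct_mulVec, mulVec_mulVec, mulVec_mulVec,
    single_one_dotProduct, mulVec_single_one]
  rfl

end Matrix

def colPair (x y : Fin 3 → ℝ) : Matrix (Fin 3) (Fin 2) ℝ := of fun i => ![x i, y i]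

theorem mul_colPair (A : Matrix (Fin 3) (Fin 3) ℝ) (x y : Fin 3 → ℝ) :
    A * colPair x y = colPair (A *ᵥ x) (A *ᵥ y) := by
  ext i j
  fin_cases j <;> simp [colPair, mul_apply, mulVec, dotProduct]

def colTop : (Fin 3 → ℝ) →ₗ[ℝ] Fin 6 → ℝ where
  toFun x i := if h : (i : ℕ) < 3 then x ⟨i, h⟩ else 0
  map_add' x x' := by ext i; by_cases h : (i : ℕ) < 3 <;> simp [h]
  map_smul' c x := by ext i; by_cases h : (i : ℕ) < 3 <;> simp [h]

def colBottom : (Fin 3 → ℝ) →ₗ[ℝ] Fin 6 → ℝ where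
  toFun y i := if h : (i : ℕ) < 3 then 0 else y ⟨i - 3, by omega⟩
  map_add' y y' := by ext i; by_cases h : (i : ℕ) < 3 <;> simp [h]
  map_smul' c y := by ext i; by_cases h : (i : ℕ) < 3 <;> simp [h]

section BigMat

variable (P₁ P₂ : Matrix (Fin 3) (Fin 4) ℝ) (x y : Fin 3 → ℝ)

theorem bigMat_eq_submatrix_fromBlocks :
    bigMat P₁ P₂ x y = (fromBlocks P₁ (colPair x 0) P₂ (colPair 0 y)).submatrix
      finSumFinEquiv.symm finSumFinEquiv.symm := by
  ext i j
  fin_cases i <;> fin_cases j <;> rfl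

theorem det_bigMat_mul_left (A B : Matrix (Fin 3) (Fin 3) ℝ) :
    (bigMat (A * P₁) (B * P₂) (A *ᵥ x) (B *ᵥ y)).det =
      A.det * B.det * (bigMat P₁ P₂ x y).det := by
  have h := det_mul ((fromBlocks A 0 0 B).submatrix
    (finSumFinEquiv (m := 3) (n := 3)).symm finSumFinEquiv.symm) (bigMat P₁ P₂ x y)
  rw [det_submatrix_equiv_self, det_fromBlocks_zero₂₁, bigMat_eq_submatrix_fromBlocks,
    submatrix_mul_equiv, fromBlocks_multiply] at h
  simpa [mul_colPair, bigMat_eq_submatrix_fromBlocks] using h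

theorem det_bigMat_mul_right (K : Matrix (Fin 4) (Fin 4) ℝ) :
    (bigMat (P₁ * K) (P₂ * K) x y).det = (bigMat P₁ P₂ x y).det * K.det := by
  have h := det_mul (bigMat P₁ P₂ x y) ((fromBlocks K 0 0 (1 : Matrix (Fin 2) (Fin 2) ℝ)).submatrix
    (finSumFinEquiv (m := 4) (n := 2)).symm (finSumFinEquiv (m := 4) (n := 2)).symm)
  rw [det_submatrix_equiv_self, det_fromBlocks_zero₂₁, bigMat_eq_submatrix_fromBlocks,
    submatrix_mul_equiv, fromBlocks_multiply] at h
  simpa [bigMat_eq_submatrix_fromBlocks] using h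

theorem bigMat_eq_updateCol_four :
    bigMat P₁ P₂ x y = (bigMat P₁ P₂ 0 y).updateCol 4 (colTop x) := by
  ext i j
  fin_cases i <;> fin_cases j <;> simp [bigMat, colTop]

theorem bigMat_eq_updateCol_five :
    bigMat P₁ P₂ x y = (bigMat P₁ P₂ x 0).updateCol 5 (colBottom y) := by
  ext i j
  fin_cases i <;> fin_cases j <;> simp [bigMat, colBottom]

theorem det_bigMat_eq_sum_left :
    (bigMat P₁ P₂ x y).det = ∑ a, x a * (bigMat P₁ P₂ (Pi.single a 1) y).det := by
  conv_lhs => rw [bigMat_eq_updateCol_four, pi_eq_sum_univ' x, map_sum]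
  simp only [map_smul, det_updateCol_sum_smul, ← bigMat_eq_updateCol_four]

theorem det_bigMat_eq_sum_right :
    (bigMat P₁ P₂ x y).det = ∑ b, y b * (bigMat P₁ P₂ x (Pi.single b 1)).det := by
  conv_lhs => rw [bigMat_eq_updateCol_five, pi_eq_sum_univ' y, map_sum]
  simp only [map_smul, det_updateCol_sum_smul, ← bigMat_eq_updateCol_five]

theorem det_bigMat_eq_dotProduct_psi : (bigMat P₁ P₂ x y).det = x ⬝ᵥ (psi P₁ P₂ *ᵥ y) := by
  rw [det_bigMat_eq_sum_left]
  refine Finset.sum_congr rfl fun a _ => ?_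
  rw [det_bigMat_eq_sum_right, mulVec, dotProduct]
  simp only [psi, mul_comm (y _)]

end BigMat

section Psi

variable (Q₁ Q₂ : Matrix (Fin 3) (Fin 4) ℝ)

theorem transpose_mul_psi_mul (A B : Matrix (Fin 3) (Fin 3) ℝ) :
    Aᵀ * psi (A * Q₁) (B * Q₂) * B = (A.det * B.det) • psi Q₁ Q₂ := by
  ext a b
  have h := det_bigMat_mul_left Q₁ Q₂ (Pi.single a 1) (Pi.single b 1) A B
  rwa [det_bigMat_eq_dotProduct_psi, ← transpose_mul_mul_apply] at h

theorem psi_mul_right (K : Matrix (Fin 4) (Fin 4) ℝ) :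
    psi (Q₁ * K) (Q₂ * K) = K.det • psi Q₁ Q₂ := by
  ext a b
  simp [psi, det_bigMat_mul_right, mul_comm]

theorem psi_nonsing_inv_mul {A B : Matrix (Fin 3) (Fin 3) ℝ} (hA : A.det ≠ 0)
    (hB : B.det ≠ 0) :
    psi (A⁻¹ * Q₁) (B⁻¹ * Q₂) = (A.det * B.det)⁻¹ • (Aᵀ * psi Q₁ Q₂ * B) := by
  have h := transpose_mul_psi_mul (A⁻¹ * Q₁) (B⁻¹ * Q₂) A B
  rw [mul_nonsing_inv_cancel_left _ _ hA.isUnit, mul_nonsing_inv_cancel_left _ _ hB.isUnit] at h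
  rw [h, inv_smul_smul₀ (mul_ne_zero hA hB)]

end Psi

theorem IsCamera.nonsing_inv_mul {P : Matrix (Fin 3) (Fin 4) ℝ} (hP : IsCamera P)
    {A : Matrix (Fin 3) (Fin 3) ℝ} (hA : A.det ≠ 0) : IsCamera (A⁻¹ * P) :=
  (rank_mul_eq_right_of_isUnit_det _ _ (isUnit_nonsing_inv_det _ hA.isUnit)).trans hP

section Compatible

variable {n : ℕ} {E : Fin n → Fin n → Prop} {F : Fin n → Fin n → Matrix (Fin 3) (Fin 3) ℝ}
  {K : Fin n → Matrix (Fin 3) (Fin 3) ℝ}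

theorem Compatible.transpose_mul_mul (h : Compatible n E F) (hK : ∀ i, (K i).det ≠ 0) :
    Compatible n E (fun i j => (K i)ᵀ * F i j * K j) := by
  obtain ⟨P, lam, hP, hF⟩ := h
  refine ⟨fun i => (K i)⁻¹ * P i, fun i j => ((K i).det * (K j).det)⁻¹ * lam i j,
    fun i => (hP i).nonsing_inv_mul (hK i), fun i j hij => ?_⟩
  obtain ⟨hlam, hpsi⟩ := hF i j hij
  refine ⟨by simp [hK, hlam], ?_⟩
  rw [psi_nonsing_inv_mul _ _ (hK i) (hK j), ← hpsi, mul_smul, Matrix.mul_smul, Matrix.smul_mul]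

theorem compatible_iff_transpose_mul_mul (hK : ∀ i, (K i).det ≠ 0) :
    Compatible n E F ↔ Compatible n E (fun i j => (K i)ᵀ * F i j * K j) := by
  refine ⟨fun h => h.transpose_mul_mul hK, fun h => ?_⟩
  have hK_inv (i : Fin n) : (K i)⁻¹.det ≠ 0 := by simpa using hK i
  convert h.transpose_mul_mul hK_inv using 3 with i j
  rw [transpose_nonsing_inv, Matrix.mul_assoc (K i)ᵀ,
    nonsing_inv_mul_cancel_left _ _ (by simpa using (hK i).isUnit),
    mul_nonsing_inv_cancel_right _ _ (hK j).isUnit]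

end Compatible

theorem stmt4_general (n : ℕ) (P : Fin n → Matrix (Fin 3) (Fin 4) ℝ)
    (H : Matrix (Fin 4) (Fin 4) ℝ) (hH : H.det ≠ 0)
    (H₁ : Fin n → Matrix (Fin 3) (Fin 3) ℝ) (hH₁ : ∀ i, (H₁ i).det ≠ 0) :
    (∀ i j, ∃ μ : ℝ, μ ≠ 0 ∧
        psi ((H₁ i)⁻¹ * P i * H) ((H₁ j)⁻¹ * P j * H) =
          μ • ((H₁ i)ᵀ * psi (P i) (P j) * H₁ j)) ∧
      (∀ (E : Fin n → Fin n → Prop) (F : Fin n → Fin n → Matrix (Fin 3) (Fin 3) ℝ),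
        (∀ i j, E i j → (F i j).rank = 2) →
        (Compatible n E F ↔ Compatible n E (fun i j => (H₁ i)ᵀ * F i j * H₁ j))) := by
  refine ⟨fun i j => ⟨((H₁ i).det * (H₁ j).det)⁻¹ * H.det, by simp [hH₁, hH], ?_⟩,
    fun E F _ => compatible_iff_transpose_mul_mul hH₁⟩
  rw [psi_mul_right, psi_nonsing_inv_mul _ _ (hH₁ i) (hH₁ j), smul_smul, mul_comm]

theorem stmt4 (n : ℕ) (P : Fin n → Matrix (Fin 3) (Fin 4) ℝ)
    (hP : ∀ i, IsCamera (P i))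
    (H : Matrix (Fin 4) (Fin 4) ℝ) (hH : H.det ≠ 0)
    (H₁ : Fin n → Matrix (Fin 3) (Fin 3) ℝ) (hH₁ : ∀ i, (H₁ i).det ≠ 0) :
    (∀ i j, ∃ μ : ℝ, μ ≠ 0 ∧
        psi ((H₁ i)⁻¹ * P i * H) ((H₁ j)⁻¹ * P j * H) =
          μ • ((H₁ i)ᵀ * psi (P i) (P j) * H₁ j)) ∧
      (∀ (E : Fin n → Fin n → Prop) (F : Fin n → Fin n → Matrix (Fin 3) (Fin 3) ℝ),
        (∀ i j, E i j → (F i j).rank = 2) →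
        (Compatible n E F ↔ Compatible n E (fun i j => (H₁ i)ᵀ * F i j * H₁ j))) :=
  stmt4_general n P H hH H₁ hH₁
end

section
/- Let {F^{ij}} be a compatible family of fundamental matrices whose index set contains the pairs (s,i), (i,j), and (j,t), and let {Pₖ} be a solution containing cameras P_s, P_i, P_j, P_t. Then the epipolar number (e_i^s)ᵀ F^{ij} e_j^t equals 0 if and only if the centers of P_s, P_i, P_j, P_t are coplanar, i.e., nonzero vectors c_s, c_i, c_j, c_t ∈ ℝ⁴ spanning ker P_s, ker P_i, ker P_j, ker P_t span a subspace of ℝ⁴ of dimension at most 3. -/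
open Matrix

/-!
The form `(a, b) ↦ det [P_i | P_i a | 0; P_j | 0 | P_j b]` on `ℝ⁴` is bilinear and alternating
(for `b = a` the vector `(a, -1, -1)` lies in the kernel of the `6 × 6` matrix), and both centers
`c_i`, `c_j` lie in its radical. It is nonzero, because cameras are surjective and
`ψ(P_i, P_j) ≠ 0`. An alternating form with two independent vectors `c_i`, `c_j` in its radical
vanishes at `(a, b)` exactly when `a, c_i, c_j, b` do not span `ℝ⁴`. Finally the kernel of a
rank-2 fundamental matrix is a line, so the epipoles are images of centers, `e_i^s ∝ P_i c_s`
and `e_j^t ∝ P_j c_t`, and the epipolar number is a nonzero multiple of the form at `(c_s, c_t)`.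
-/

open Module Submodule

section LinearAlgebra

variable {K : Type*} [Field K] {m n : Type*} [Fintype n]

theorem Matrix.rank_add_finrank_ker (M : Matrix m n K) :
    M.rank + finrank K (LinearMap.ker M.mulVecLin) = Fintype.card n := by
  rw [Matrix.rank, LinearMap.finrank_range_add_finrank_ker, finrank_fintype_fun_eq_card]

theorem Matrix.exists_mulVec_eq_zero_of_rank_lt (M : Matrix m n K) (h : M.rank < Fintype.card n) :
    ∃ v ≠ 0, M *ᵥ v = 0 := by
  have hker : LinearMap.ker M.mulVecLin ≠ ⊥ := by
    intro hbot
    have := M.rank_add_finrank_ker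
    rw [hbot, finrank_bot] at this
    omega
  obtain ⟨v, hv, hv0⟩ := Submodule.exists_mem_ne_zero_of_ne_bot hker
  exact ⟨v, hv0, hv⟩

theorem Matrix.exists_eq_smul_of_mulVec_eq_zero (M : Matrix m n K)
    (h : M.rank + 1 = Fintype.card n) {v w : n → K} (hv0 : v ≠ 0) (hv : M *ᵥ v = 0)
    (hw : M *ᵥ w = 0) : ∃ r : K, w = r • v := by
  have hker : finrank K (LinearMap.ker M.mulVecLin) = 1 := by
    have := M.rank_add_finrank_ker
    omega
  obtain ⟨r, hr⟩ := (finrank_eq_one_iff_of_nonzero' (⟨v, hv⟩ : LinearMap.ker M.mulVecLin)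
    fun h => hv0 (congrArg Subtype.val h)).mp hker ⟨w, hw⟩
  exact ⟨r, by simpa using congrArg Subtype.val hr.symm⟩

theorem Matrix.mulVec_surjective_of_rank_eq [Fintype m] (M : Matrix m n K)
    (h : M.rank = Fintype.card m) : Function.Surjective M.mulVec :=
  LinearMap.range_eq_top.mp <| Submodule.eq_top_of_finrank_eq (S := LinearMap.range M.mulVecLin)
    (by rw [finrank_fintype_fun_eq_card]; exact h)

theorem Matrix.linearIndependent_pair_of_mulVec (M : Matrix m n K) {u w : n → K}
    (hu : M *ᵥ u ≠ 0) (hw0 : w ≠ 0) (hw : M *ᵥ w = 0) : LinearIndependent K ![u, w] := by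
  refine LinearIndependent.pair_iff.mpr fun s t hst => ?_
  obtain rfl : s = 0 := by
    have := congrArg (M *ᵥ ·) hst
    simp only [mulVec_add, mulVec_smul, hw, smul_zero, add_zero, mulVec_zero] at this
    exact (smul_eq_zero.mp this).resolve_right hu
  rw [zero_smul, zero_add] at hst
  exact ⟨rfl, (smul_eq_zero.mp hst).resolve_right hw0⟩

end LinearAlgebra

namespace LinearMap.IsAlt

variable {K V : Type*} [Field K] [AddCommGroup V] [Module K V] {B : V →ₗ[K] V →ₗ[K] K}
  {a b u w : V}

theorem apply_eq_zero_of_left_eq_zero (hB : B.IsAlt) (hu : B u = 0) (x : V) : B x u = 0 := by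
  rw [← hB.neg, hu, zero_apply, neg_zero]

theorem eq_zero_of_span_eq_top (hB : B.IsAlt) (hu : B u = 0) (hw : B w = 0)
    (hspan : span K {a, u, w, b} = ⊤) (hab : B a b = 0) : B = 0 := by
  have hba : B b a = 0 := by rw [← hB.neg, hab, neg_zero]
  have hgen : ∀ x ∈ ({a, u, w, b} : Set V), ∀ y ∈ ({a, u, w, b} : Set V), B x y = 0 := by
    rintro x (rfl | rfl | rfl | rfl) y (rfl | rfl | rfl | rfl) <;>
      simp [hu, hw, hab, hba, hB.self_eq_zero, hB.apply_eq_zero_of_left_eq_zero hu,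
        hB.apply_eq_zero_of_left_eq_zero hw]
  exact LinearMap.ext_on hspan fun x hx => LinearMap.ext_on hspan fun y hy => hgen x hx y hy

theorem apply_eq_zero_of_not_linearIndependent (hB : B.IsAlt) (hu : B u = 0) (hw : B w = 0)
    (huw : LinearIndependent K ![u, w]) (h : ¬LinearIndependent K ![a, u, w, b]) :
    B a b = 0 := by
  obtain ⟨g, hg, k, hk⟩ := Fintype.not_linearIndependent_iff.mp h
  simp only [Fin.sum_univ_four, Matrix.cons_val_zero, Matrix.cons_val_one, Matrix.cons_val_two,
    Matrix.cons_val_three, Matrix.head_cons, Matrix.tail_cons] at hg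
  have h0 : g 0 * B a b = 0 := by
    simpa [hu, hw, hB.self_eq_zero] using congrArg (B · b) hg
  have h3 : g 3 * B a b = 0 := by
    simpa [hB.self_eq_zero, hB.apply_eq_zero_of_left_eq_zero hu,
      hB.apply_eq_zero_of_left_eq_zero hw] using congrArg (B a) hg
  by_contra hab
  rw [(mul_eq_zero.mp h0).resolve_right hab, (mul_eq_zero.mp h3).resolve_right hab,
    zero_smul, zero_smul, zero_add, add_zero] at hg
  obtain ⟨h1, h2⟩ := LinearIndependent.pair_iff.mp huw _ _ hg
  fin_cases k <;> simp_all

theorem apply_eq_zero_iff_finrank_span_le [FiniteDimensional K V] (hV : finrank K V = 4)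
    (hB : B.IsAlt) (hB0 : B ≠ 0) (hu : B u = 0) (hw : B w = 0)
    (huw : LinearIndependent K ![u, w]) :
    B a b = 0 ↔ finrank K (span K {a, u, w, b}) ≤ 3 := by
  constructor
  · intro hab
    by_contra! hlt
    have hle := (span K {a, u, w, b}).finrank_le
    exact hB0 (hB.eq_zero_of_span_eq_top hu hw (eq_top_of_finrank_eq (by omega)) hab)
  · intro hle
    refine hB.apply_eq_zero_of_not_linearIndependent hu hw huw fun hli => ?_
    have := finrank_span_eq_card hli
    rw [Matrix.range_cons, Matrix.range_cons, Matrix.range_cons, Matrix.range_cons,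
      Matrix.range_empty, Set.union_empty, Set.singleton_union, Set.singleton_union,
      Set.singleton_union, Fintype.card_fin] at this
    omega

end LinearMap.IsAlt

theorem Fin.append_add_append {α : Type*} [Add α] {k l : ℕ} (a a' : Fin k → α)
    (b b' : Fin l → α) : Fin.append (a + a') (b + b') = Fin.append a b + Fin.append a' b' := by
  funext r
  refine Fin.addCases (fun i => ?_) (fun i => ?_) r <;> simp

theorem Fin.append_smul_append {R α : Type*} [SMul R α] {k l : ℕ} (c : R) (a : Fin k → α)
    (b : Fin l → α) : Fin.append (c • a) (c • b) = c • Fin.append a b := by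
  funext r
  refine Fin.addCases (fun i => ?_) (fun i => ?_) r <;> simp

section Camera

variable (P₁ P₂ : Matrix (Fin 3) (Fin 4) ℝ)

theorem bigMat_mulVec_append (x y : Fin 3 → ℝ) (a : Fin 4 → ℝ) (α β : ℝ) :
    bigMat P₁ P₂ x y *ᵥ Fin.append a ![α, β] =
      Fin.append (P₁ *ᵥ a + α • x) (P₂ *ᵥ a + β • y) := by
  funext r
  refine Fin.addCases (m := 3) (n := 3) (fun i => ?_) (fun i => ?_) r <;>
    simp [mulVec, dotProduct, Fin.sum_univ_add (a := 4) (b := 2), bigMat, Fin.sum_univ_two,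
      mul_comm, -Fin.natAdd_eq_addNat]

theorem bigMat_updateCol_four (x x' y : Fin 3 → ℝ) :
    (bigMat P₁ P₂ x y).updateCol 4 (Fin.append x' (0 : Fin 3 → ℝ)) = bigMat P₁ P₂ x' y := by
  ext r k
  refine Fin.addCases (m := 3) (n := 3) (fun i => ?_) (fun i => ?_) r <;> fin_cases k <;>
    simp [bigMat, -Fin.natAdd_eq_addNat]

theorem bigMat_updateCol_five (x y y' : Fin 3 → ℝ) :
    (bigMat P₁ P₂ x y).updateCol 5 (Fin.append (0 : Fin 3 → ℝ) y') = bigMat P₁ P₂ x y' := by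
  ext r k
  refine Fin.addCases (m := 3) (n := 3) (fun i => ?_) (fun i => ?_) r <;> fin_cases k <;>
    simp [bigMat, -Fin.natAdd_eq_addNat]

variable {P₁ P₂} in
theorem det_bigMat_eq_zero {x y : Fin 3 → ℝ} (a : Fin 4 → ℝ) (α β : ℝ)
    (hne : a ≠ 0 ∨ α ≠ 0 ∨ β ≠ 0) (h₁ : P₁ *ᵥ a + α • x = 0) (h₂ : P₂ *ᵥ a + β • y = 0) :
    (bigMat P₁ P₂ x y).det = 0 := by
  refine exists_mulVec_eq_zero_iff.mp ⟨Fin.append a ![α, β], fun hv => ?_, ?_⟩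
  · rcases hne with ha | hα | hβ
    · exact ha (funext fun k => (Fin.append_left a ![α, β] k).symm.trans (congrFun hv _))
    · exact hα (by simpa using (Fin.append_right a ![α, β] 0).symm.trans (congrFun hv _))
    · exact hβ (by simpa using (Fin.append_right a ![α, β] 1).symm.trans (congrFun hv _))
  · rw [bigMat_mulVec_append, h₁, h₂]
    funext r
    refine Fin.addCases (fun i => ?_) (fun i => ?_) r <;> simp [-Fin.natAdd_eq_addNat]

theorem det_bigMat_add_left (x x' y : Fin 3 → ℝ) :
    (bigMat P₁ P₂ (x + x') y).det = (bigMat P₁ P₂ x y).det + (bigMat P₁ P₂ x' y).det := by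
  have := det_updateCol_add (bigMat P₁ P₂ 0 y) 4 (Fin.append x (0 : Fin 3 → ℝ))
    (Fin.append x' (0 : Fin 3 → ℝ))
  rwa [← Fin.append_add_append, add_zero, bigMat_updateCol_four, bigMat_updateCol_four,
    bigMat_updateCol_four] at this

theorem det_bigMat_smul_left (c : ℝ) (x y : Fin 3 → ℝ) :
    (bigMat P₁ P₂ (c • x) y).det = c * (bigMat P₁ P₂ x y).det := by
  have := det_updateCol_smul (bigMat P₁ P₂ 0 y) 4 c (Fin.append x (0 : Fin 3 → ℝ))
  rwa [← Fin.append_smul_append, smul_zero, bigMat_updateCol_four,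
    bigMat_updateCol_four] at this

theorem det_bigMat_add_right (x y y' : Fin 3 → ℝ) :
    (bigMat P₁ P₂ x (y + y')).det = (bigMat P₁ P₂ x y).det + (bigMat P₁ P₂ x y').det := by
  have := det_updateCol_add (bigMat P₁ P₂ x 0) 5 (Fin.append 0 y) (Fin.append 0 y')
  rwa [← Fin.append_add_append, add_zero, bigMat_updateCol_five, bigMat_updateCol_five,
    bigMat_updateCol_five] at this

theorem det_bigMat_smul_right (c : ℝ) (x y : Fin 3 → ℝ) :
    (bigMat P₁ P₂ x (c • y)).det = c * (bigMat P₁ P₂ x y).det := by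
  have := det_updateCol_smul (bigMat P₁ P₂ x 0) 5 c (Fin.append 0 y)
  rwa [← Fin.append_smul_append, smul_zero, bigMat_updateCol_five,
    bigMat_updateCol_five] at this

noncomputable def detForm : (Fin 3 → ℝ) →ₗ[ℝ] (Fin 3 → ℝ) →ₗ[ℝ] ℝ :=
  LinearMap.mk₂ ℝ (fun x y => (bigMat P₁ P₂ x y).det) (det_bigMat_add_left P₁ P₂)
    (det_bigMat_smul_left P₁ P₂) (det_bigMat_add_right P₁ P₂) (det_bigMat_smul_right P₁ P₂)

theorem psi_eq_toMatrix₂' : psi P₁ P₂ = LinearMap.toMatrix₂' ℝ (detForm P₁ P₂) := by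
  ext a b
  simp only [LinearMap.toMatrix₂'_apply, psi, detForm, LinearMap.mk₂_apply]

theorem dotProduct_psi_mulVec (x y : Fin 3 → ℝ) :
    x ⬝ᵥ (psi P₁ P₂ *ᵥ y) = (bigMat P₁ P₂ x y).det := by
  rw [psi_eq_toMatrix₂', ← Matrix.toLinearMap₂'_apply', Matrix.toLinearMap₂'_toMatrix']
  rfl

noncomputable def pullbackForm : (Fin 4 → ℝ) →ₗ[ℝ] (Fin 4 → ℝ) →ₗ[ℝ] ℝ :=
  (detForm P₁ P₂).compl₁₂ P₁.mulVecLin P₂.mulVecLin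

theorem pullbackForm_apply (a b : Fin 4 → ℝ) :
    pullbackForm P₁ P₂ a b = (bigMat P₁ P₂ (P₁ *ᵥ a) (P₂ *ᵥ b)).det := by
  simp only [pullbackForm, detForm, LinearMap.compl₁₂_apply, mulVecLin_apply,
    LinearMap.mk₂_apply]

theorem pullbackForm_isAlt : (pullbackForm P₁ P₂).IsAlt := fun a =>
  det_bigMat_eq_zero a (-1) (-1) (Or.inr (Or.inl (by norm_num))) (by simp) (by simp)

variable {P₁ P₂}

theorem pullbackForm_eq_zero_of_mulVec_left {c : Fin 4 → ℝ} (hc : P₁ *ᵥ c = 0) :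
    pullbackForm P₁ P₂ c = 0 := by
  refine LinearMap.ext fun b => ?_
  rw [pullbackForm_apply, hc, LinearMap.zero_apply]
  exact det_bigMat_eq_zero 0 1 0 (Or.inr (Or.inl one_ne_zero)) (by simp) (by simp)

theorem pullbackForm_eq_zero_of_mulVec_right {c : Fin 4 → ℝ} (hc : P₂ *ᵥ c = 0) :
    pullbackForm P₁ P₂ c = 0 := by
  refine LinearMap.ext fun a => ?_
  rw [LinearMap.zero_apply, ← (pullbackForm_isAlt P₁ P₂).neg, neg_eq_zero, pullbackForm_apply, hc]
  exact det_bigMat_eq_zero 0 0 1 (Or.inr (Or.inr one_ne_zero)) (by simp) (by simp)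

theorem psi_mulVec_mulVec_eq_zero {c : Fin 4 → ℝ} (hc : P₁ *ᵥ c = 0) :
    psi P₁ P₂ *ᵥ (P₂ *ᵥ c) = 0 := by
  funext a
  rw [← single_one_dotProduct a (psi P₁ P₂ *ᵥ (P₂ *ᵥ c)), dotProduct_psi_mulVec, Pi.zero_apply]
  exact det_bigMat_eq_zero c 0 (-1) (Or.inr (Or.inr (by norm_num))) (by simp [hc]) (by simp)

theorem psi_eq_zero_of_mulVec_eq_zero {c : Fin 4 → ℝ} (hc : c ≠ 0) (h₁ : P₁ *ᵥ c = 0)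
    (h₂ : P₂ *ᵥ c = 0) : psi P₁ P₂ = 0 := by
  ext a b
  exact det_bigMat_eq_zero c 0 0 (Or.inl hc) (by simp [h₁]) (by simp [h₂])

theorem pullbackForm_ne_zero (h₁ : IsCamera P₁) (h₂ : IsCamera P₂) (hψ : psi P₁ P₂ ≠ 0) :
    pullbackForm P₁ P₂ ≠ 0 := by
  contrapose! hψ
  ext a b
  obtain ⟨a', ha'⟩ := P₁.mulVec_surjective_of_rank_eq h₁ (Pi.single a 1)
  obtain ⟨b', hb'⟩ := P₂.mulVec_surjective_of_rank_eq h₂ (Pi.single b 1)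
  simpa [psi, pullbackForm_apply, ha', hb'] using congrArg (· a' b') hψ

theorem pullbackForm_apply_eq_zero_iff (h₁ : IsCamera P₁) (h₂ : IsCamera P₂)
    (hψ : psi P₁ P₂ ≠ 0) {c₁ c₂ : Fin 4 → ℝ} (hc₁0 : c₁ ≠ 0) (hc₁ : P₁ *ᵥ c₁ = 0)
    (hc₂0 : c₂ ≠ 0) (hc₂ : P₂ *ᵥ c₂ = 0) (a b : Fin 4 → ℝ) :
    pullbackForm P₁ P₂ a b = 0 ↔ finrank ℝ (span ℝ {a, c₁, c₂, b}) ≤ 3 := by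
  have hP₂c₁ : P₂ *ᵥ c₁ ≠ 0 := fun h => hψ (psi_eq_zero_of_mulVec_eq_zero hc₁0 hc₁ h)
  exact (pullbackForm_isAlt P₁ P₂).apply_eq_zero_iff_finrank_span_le (by simp)
    (pullbackForm_ne_zero h₁ h₂ hψ) (pullbackForm_eq_zero_of_mulVec_left hc₁)
    (pullbackForm_eq_zero_of_mulVec_right hc₂) (P₂.linearIndependent_pair_of_mulVec hP₂c₁ hc₂0 hc₂)

variable {F : Matrix (Fin 3) (Fin 3) ℝ} {μ : ℝ}

theorem psi_ne_zero_of_smul_eq (hF : F.rank = 2) (hμ : μ ≠ 0) (h : μ • F = psi P₁ P₂) :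
    psi P₁ P₂ ≠ 0 := by
  rw [← h]
  refine smul_ne_zero hμ fun hF0 => ?_
  simp [hF0] at hF

theorem exists_eq_smul_mulVec_of_mulVec_eq_zero (hF : F.rank = 2) (hμ : μ ≠ 0)
    (h : μ • F = psi P₁ P₂) {c : Fin 4 → ℝ} (hc0 : c ≠ 0) (hc : P₁ *ᵥ c = 0)
    {e : Fin 3 → ℝ} (he0 : e ≠ 0) (he : F *ᵥ e = 0) : ∃ r : ℝ, r ≠ 0 ∧ e = r • (P₂ *ᵥ c) := by
  have hPc : P₂ *ᵥ c ≠ 0 := fun h0 =>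
    psi_ne_zero_of_smul_eq hF hμ h (psi_eq_zero_of_mulVec_eq_zero hc0 hc h0)
  have hFc : F *ᵥ (P₂ *ᵥ c) = 0 := by
    have := psi_mulVec_mulVec_eq_zero (P₂ := P₂) hc
    rw [← h, smul_mulVec] at this
    exact (smul_eq_zero.mp this).resolve_left hμ
  obtain ⟨r, rfl⟩ := F.exists_eq_smul_of_mulVec_eq_zero (by rw [hF]; rfl) hPc hFc he
  exact ⟨r, left_ne_zero_of_smul he0, rfl⟩

theorem smul_dotProduct_mulVec_smul_eq_zero_iff (hμ : μ ≠ 0) (h : μ • F = psi P₁ P₂)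
    {α β : ℝ} (hα : α ≠ 0) (hβ : β ≠ 0) (a b : Fin 4 → ℝ) :
    (α • (P₁ *ᵥ a)) ⬝ᵥ (F *ᵥ (β • (P₂ *ᵥ b))) = 0 ↔ pullbackForm P₁ P₂ a b = 0 := by
  have hμF : μ * ((α • (P₁ *ᵥ a)) ⬝ᵥ (F *ᵥ (β • (P₂ *ᵥ b)))) =
      α * β * pullbackForm P₁ P₂ a b := by
    rw [pullbackForm_apply, ← dotProduct_psi_mulVec, ← h]
    simp only [smul_mulVec, mulVec_smul, smul_dotProduct, dotProduct_smul, smul_eq_mul]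
    ring
  rw [← mul_eq_zero_iff_left hμ, hμF, mul_eq_zero_iff_left (mul_ne_zero hα hβ)]

theorem IsCamera.exists_center {P : Matrix (Fin 3) (Fin 4) ℝ} (hP : IsCamera P) :
    ∃ c ≠ 0, P *ᵥ c = 0 :=
  P.exists_mulVec_eq_zero_of_rank_lt (by rw [hP]; decide)

end Camera

/-- for a compatible family with solution `P`, the epipolar number
`(e_i^s)ᵀ F^{ij} e_j^t` vanishes iff the centers of `P s, P i, P j, P t` are coplanar. -/
theorem stmt7 (n : ℕ) (E : Fin n → Fin n → Prop) (hEsym : ∀ i j, E i j → E j i)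
    (F : Fin n → Fin n → Matrix (Fin 3) (Fin 3) ℝ)
    (hFsym : ∀ i j, F j i = (F i j)ᵀ)
    (hrank : ∀ i j, E i j → (F i j).rank = 2)
    (s i j t : Fin n) (hsi : E s i) (hij : E i j) (hjt : E j t)
    (P : Fin n → Matrix (Fin 3) (Fin 4) ℝ) (hP : ∀ k, IsCamera (P k))
    (lam : Fin n → Fin n → ℝ)
    (hsol : ∀ a b, E a b → lam a b ≠ 0 ∧ lam a b • F a b = psi (P a) (P b))
    (eis ejt : Fin 3 → ℝ)
    (heis : eis ≠ 0) (hkis : F s i *ᵥ eis = 0)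
    (hejt : ejt ≠ 0) (hkjt : F t j *ᵥ ejt = 0) :
    eis ⬝ᵥ (F i j *ᵥ ejt) = 0 ↔
      ∀ cs ci cj ct : Fin 4 → ℝ,
        cs ≠ 0 → P s *ᵥ cs = 0 → ci ≠ 0 → P i *ᵥ ci = 0 →
        cj ≠ 0 → P j *ᵥ cj = 0 → ct ≠ 0 → P t *ᵥ ct = 0 →
        Module.finrank ℝ (Submodule.span ℝ {cs, ci, cj, ct}) ≤ 3 := by
  obtain ⟨hμsi, hψsi⟩ := hsol s i hsi
  obtain ⟨hμij, hψij⟩ := hsol i j hij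
  obtain ⟨hμtj, hψtj⟩ := hsol t j (hEsym j t hjt)
  have hFtj : (F t j).rank = 2 := by rw [hFsym, rank_transpose]; exact hrank j t hjt
  have key : ∀ cs ci cj ct : Fin 4 → ℝ,
      cs ≠ 0 → P s *ᵥ cs = 0 → ci ≠ 0 → P i *ᵥ ci = 0 →
      cj ≠ 0 → P j *ᵥ cj = 0 → ct ≠ 0 → P t *ᵥ ct = 0 →
      (eis ⬝ᵥ (F i j *ᵥ ejt) = 0 ↔ finrank ℝ (span ℝ {cs, ci, cj, ct}) ≤ 3) := by
    intro cs ci cj ct hcs0 hcs hci0 hci hcj0 hcj hct0 hct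
    obtain ⟨α, hα, rfl⟩ :=
      exists_eq_smul_mulVec_of_mulVec_eq_zero (hrank s i hsi) hμsi hψsi hcs0 hcs heis hkis
    obtain ⟨β, hβ, rfl⟩ :=
      exists_eq_smul_mulVec_of_mulVec_eq_zero hFtj hμtj hψtj hct0 hct hejt hkjt
    rw [smul_dotProduct_mulVec_smul_eq_zero_iff hμij hψij hα hβ]
    exact pullbackForm_apply_eq_zero_iff (hP i) (hP j)
      (psi_ne_zero_of_smul_eq (hrank i j hij) hμij hψij) hci0 hci hcj0 hcj cs ct
  refine ⟨fun h cs ci cj ct hcs0 hcs hci0 hci hcj0 hcj hct0 hct =>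
    (key cs ci cj ct hcs0 hcs hci0 hci hcj0 hcj hct0 hct).1 h, fun h => ?_⟩
  obtain ⟨cs, hcs0, hcs⟩ := (hP s).exists_center
  obtain ⟨ci, hci0, hci⟩ := (hP i).exists_center
  obtain ⟨cj, hcj0, hcj⟩ := (hP j).exists_center
  obtain ⟨ct, hct0, hct⟩ := (hP t).exists_center
  exact (key cs ci cj ct hcs0 hcs hci0 hci hcj0 hcj hct0 hct).2
    (h cs ci cj ct hcs0 hcs hci0 hci hcj0 hcj hct0 hct)
end
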